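/- Let α be expansive of exponent θ > 0 and eventually decreasing, and fix ε < θ/6. If ℓ ≤ m are natural numbers that are sufficiently large, then a_ℓ · t_m ≤ a_{ℓ+1}, where a_n is the length of the n-th atom and t_n the n-th tail of α. -/

import Mathlib

open Filter Set MeasureTheory Topology

noncomputable section

/-- Data of a countable interval partition `α` of `(0,1]`: `a n` is the Lebesgue
measure of the `n`-th atom `A_n` (for `n ≥ 1`), the atoms are ordered from right
to left and their measures sum to `1`. -/
structure LurothData where
  a : ℕ → ℝ
  pos : ∀ n, 1 ≤ n → 0 < a n
  summ : Summable fun n => a (n + 1)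
  total : (∑' n : ℕ, a (n + 1)) = 1

namespace LurothData

variable (P : LurothData)

/-- the `n`-th tail `t_n = Σ_{k ≥ n} a_k`. -/
def t (n : ℕ) : ℝ := ∑' k : ℕ, P.a (n + k)

/-- the index `n` of the atom `A_n = (t_{n+1}, t_n]` containing `x` (and `0` if none). -/
def digit (x : ℝ) : ℕ := sInf {n | 1 ≤ n ∧ x ∈ Set.Ioc (P.t (n + 1)) (P.t n)}

/-- the α-Lüroth map `L_α`. -/
def map (x : ℝ) : ℝ :=
  if P.digit x = 0 then 0 else (P.t (P.digit x) - x) / P.a (P.digit x)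

/-- `dseq P n x` is the `(n+1)`-st α-Lüroth digit `ℓ_{n+1}(x)`. -/
def dseq (n : ℕ) (x : ℝ) : ℕ := P.digit (P.map^[n] x)

/-- the finite α-Lüroth expansion `[ℓ_1, …, ℓ_k]_α`. -/
def val : List ℕ → ℝ
  | [] => 0
  | l :: ls => P.t l - P.a l * val ls

/-- the α-Lüroth cylinder set `C_α(ℓ_1, …, ℓ_k)` (as the set of points whose
first `k` digits are prescribed). -/
def cyl (ls : List ℕ) : Set ℝ :=
  {x | x ∈ Set.Ioc (0 : ℝ) 1 ∧ ∀ i : Fin ls.length, P.dseq i x = ls.get i}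

end LurothData

/-- A (discretely sampled) slowly varying function. -/
def SlowlyVaryingN (ψ : ℕ → ℝ) : Prop :=
  ∀ c : ℕ, 0 < c → Tendsto (fun n => ψ (c * n) / ψ n) atTop (𝓝 1)

/-- `α` is expansive of exponent `θ`: `t_n = ψ(n) n^{-θ}` with `ψ` slowly varying. -/
def LurothData.Expansive (P : LurothData) (θ : ℝ) : Prop :=
  ∃ ψ : ℕ → ℝ, (∀ n, 0 < ψ n) ∧ SlowlyVaryingN ψ ∧
    ∀ n, 1 ≤ n → P.t n = ψ n * (n : ℝ) ^ (-θ)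

/-- `α` is eventually decreasing. -/
def LurothData.EventuallyDecreasing (P : LurothData) : Prop :=
  ∃ N : ℕ, ∀ n, N ≤ n → P.a (n + 1) < P.a n

/-- the α-Good set `G_N^{(α)}`. -/
def LurothData.goodSet (P : LurothData) (N : ℕ) : Set ℝ :=
  {x | x ∈ Set.Ioc (0 : ℝ) 1 ∧ ∀ n : ℕ, N < P.dseq n x}

/-- `G_∞^{(α)}`: points whose digits tend to infinity. -/
def LurothData.Ginf (P : LurothData) : Set ℝ :=
  {x | x ∈ Set.Ioc (0 : ℝ) 1 ∧ Tendsto (fun n => P.dseq n x) atTop atTop}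

/-- `F_∞^{(α)}`: points whose digits are non-decreasing and tend to infinity. -/
def LurothData.Finf (P : LurothData) : Set ℝ :=
  {x | x ∈ P.Ginf ∧ ∀ n : ℕ, P.dseq n x ≤ P.dseq (n + 1) x}

end

/-!
Slow variation of `ψ` gives `t_{2n} / t_n → 2^{-θ} ∈ (0, 1)`. Once the atoms decrease, the block
`A_n, …, A_{2n-1}` has length `t_n - t_{2n}`, which is then comparable both to `n a_n` and to `t_n`;
hence `a_n ≍ t_n / n`, and since also `t_n ≍ t_{n+1}`, the ratio `a_n / a_{n+1}` is bounded by
some `K`. As `t_n → 0`, eventually `a_ℓ t_m ≤ a_ℓ t_ℓ ≤ K t_ℓ a_{ℓ+1} ≤ a_{ℓ+1}`.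
-/

namespace LurothData

variable (P : LurothData)

theorem summable_a_add (n : ℕ) : Summable fun k => P.a (n + k) := by
  have hsumm : Summable P.a := (summable_nat_add_iff 1).1 P.summ
  simpa only [add_comm n] using (summable_nat_add_iff n).2 hsumm

theorem t_sub_t_add (n k : ℕ) : P.t n - P.t (n + k) = ∑ i ∈ Finset.range k, P.a (n + i) := by
  have hsplit := (P.summable_a_add n).sum_add_tsum_nat_add k
  have htail : P.t (n + k) = ∑' i, P.a (n + (i + k)) :=
    tsum_congr fun i => by rw [add_comm i k, add_assoc]
  rw [htail, t, ← hsplit, add_sub_cancel_right]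

theorem t_pos {n : ℕ} (hn : 1 ≤ n) : 0 < P.t n :=
  (P.summable_a_add n).tsum_pos (fun k => (P.pos _ (by omega)).le) 0 (P.pos _ (by omega))

theorem t_antitoneOn : AntitoneOn P.t (Set.Ici 1) := by
  intro n hn m _ hnm
  obtain ⟨k, rfl⟩ := Nat.exists_eq_add_of_le hnm
  have hblock_nonneg : 0 ≤ ∑ i ∈ Finset.range k, P.a (n + i) :=
    Finset.sum_nonneg fun i _ => (P.pos _ (le_add_right (Set.mem_Ici.1 hn))).le
  linarith [P.t_sub_t_add n k]

theorem tendsto_t_atTop : Tendsto P.t atTop (𝓝 0) :=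
  (tendsto_sum_nat_add P.a).congr fun n => tsum_congr fun k => by rw [add_comm]

theorem EventuallyDecreasing.exists_antitoneOn (hdec : P.EventuallyDecreasing) :
    ∃ D, AntitoneOn P.a (Set.Ici D) :=
  let ⟨D, hD⟩ := hdec
  ⟨D, antitoneOn_nat_Ici_of_succ_le fun n hn => (hD n hn).le⟩

theorem mul_a_add_le_t_sub_t {D n : ℕ} (hanti : AntitoneOn P.a (Set.Ici D)) (hn : D ≤ n)
    (k : ℕ) : k * P.a (n + k) ≤ P.t n - P.t (n + k) := by
  rw [P.t_sub_t_add]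
  simpa using Finset.card_nsmul_le_sum (Finset.range k) (fun i => P.a (n + i)) (P.a (n + k))
    fun i hi => hanti (Set.mem_Ici.2 (by omega)) (Set.mem_Ici.2 (by omega))
      (by simp only [Finset.mem_range] at hi; omega)

theorem t_sub_t_add_le_mul_a {D n : ℕ} (hanti : AntitoneOn P.a (Set.Ici D)) (hn : D ≤ n)
    (k : ℕ) : P.t n - P.t (n + k) ≤ k * P.a n := by
  rw [P.t_sub_t_add]
  simpa using Finset.sum_le_card_nsmul (Finset.range k) (fun i => P.a (n + i)) (P.a n)
    fun i _ => hanti (Set.mem_Ici.2 hn) (Set.mem_Ici.2 (by omega)) (by omega)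

namespace Expansive

variable {P} {θ : ℝ}

theorem tendsto_t_two_mul_div_t (hexp : P.Expansive θ) :
    Tendsto (fun n => P.t (2 * n) / P.t n) atTop (𝓝 ((2 : ℝ) ^ (-θ))) := by
  obtain ⟨ψ, hψpos, hψ, ht⟩ := hexp
  have hratio : ∀ n ≥ 1, ψ (2 * n) / ψ n * (2 : ℝ) ^ (-θ) = P.t (2 * n) / P.t n := by
    intro n hn
    have hnpos : (0 : ℝ) < n := by exact_mod_cast hn
    rw [ht n hn, ht (2 * n) (by omega), Nat.cast_mul, Nat.cast_two,
      Real.mul_rpow zero_le_two hnpos.le]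
    have hψn := hψpos n
    field_simp
  simpa using ((hψ 2 two_pos).mul_const ((2 : ℝ) ^ (-θ))).congr'
    (eventually_atTop.2 ⟨1, hratio⟩)

theorem exists_t_two_mul_le (hexp : P.Expansive θ) (hθ : 0 < θ) :
    ∃ c < 1, ∀ᶠ n in atTop, P.t (2 * n) ≤ c * P.t n := by
  obtain ⟨c, hlt, hc⟩ :=
    exists_between (Real.rpow_lt_one_of_one_lt_of_neg one_lt_two (neg_neg_of_pos hθ))
  refine ⟨c, hc, ?_⟩
  filter_upwards [hexp.tendsto_t_two_mul_div_t.eventually_lt_const hlt, eventually_ge_atTop 1]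
    with n hn hn1
  exact ((div_lt_iff₀ (P.t_pos hn1)).1 hn).le

theorem exists_t_le_mul_t_two_mul (hexp : P.Expansive θ) :
    ∃ C > 0, ∀ᶠ n in atTop, P.t n ≤ C * P.t (2 * n) := by
  obtain ⟨b, hb, hlt⟩ := exists_between (Real.rpow_pos_of_pos two_pos (-θ))
  refine ⟨b⁻¹, inv_pos.2 hb, ?_⟩
  filter_upwards [hexp.tendsto_t_two_mul_div_t.eventually_const_lt hlt, eventually_ge_atTop 1]
    with n hn hn1
  rw [inv_mul_eq_div, le_div_iff₀ hb, mul_comm]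
  exact ((lt_div_iff₀ (P.t_pos hn1)).1 hn).le

theorem exists_mul_t_le_mul_a (hexp : P.Expansive θ) (hθ : 0 < θ)
    (hdec : P.EventuallyDecreasing) : ∃ c > 0, ∀ᶠ n : ℕ in atTop, c * P.t n ≤ n * P.a n := by
  obtain ⟨c, hc, hdouble⟩ := hexp.exists_t_two_mul_le hθ
  obtain ⟨D, hanti⟩ := hdec.exists_antitoneOn
  refine ⟨1 - c, sub_pos.2 hc, ?_⟩
  filter_upwards [hdouble, eventually_ge_atTop D] with n hn hnD
  have hblock := P.t_sub_t_add_le_mul_a hanti hnD n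
  rw [← two_mul] at hblock
  linarith

theorem exists_mul_a_le_mul_t (hexp : P.Expansive θ) (hdec : P.EventuallyDecreasing) :
    ∃ C > 0, ∀ᶠ n : ℕ in atTop, n * P.a n ≤ C * P.t n := by
  obtain ⟨C, hC, hdouble⟩ := hexp.exists_t_le_mul_t_two_mul
  obtain ⟨N, hN⟩ := eventually_atTop.1 hdouble
  obtain ⟨D, hanti⟩ := hdec.exists_antitoneOn
  refine ⟨3 * C, by positivity, ?_⟩
  filter_upwards [eventually_ge_atTop (2 * (N + D) + 2)] with ℓ hℓ
  obtain ⟨n, k, rfl, hkn, hnk⟩ : ∃ n k, n + k = ℓ ∧ k ≤ n ∧ n ≤ k + 1 :=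
    ⟨ℓ - ℓ / 2, ℓ / 2, by omega, by omega, by omega⟩
  have hblock := P.mul_a_add_le_t_sub_t hanti (by omega : D ≤ n) k
  have hdoubled : P.t (2 * n) ≤ P.t (n + k) :=
    P.t_antitoneOn (Set.mem_Ici.2 (by omega)) (Set.mem_Ici.2 (by omega)) (by omega)
  have hk : ((n + k : ℕ) : ℝ) ≤ 3 * k := by norm_cast; omega
  have ha := P.pos (n + k) (by omega)
  calc ((n + k : ℕ) : ℝ) * P.a (n + k) ≤ 3 * k * P.a (n + k) := by gcongr
    _ ≤ 3 * P.t n := by linarith [P.t_pos (by omega : 1 ≤ n + k)]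
    _ ≤ 3 * (C * P.t (2 * n)) := by gcongr; exact hN n (by omega)
    _ ≤ 3 * C * P.t (n + k) := by rw [mul_assoc]; gcongr

theorem exists_a_le_mul_a_succ (hexp : P.Expansive θ) (hθ : 0 < θ)
    (hdec : P.EventuallyDecreasing) : ∃ K, ∀ᶠ n in atTop, P.a n ≤ K * P.a (n + 1) := by
  obtain ⟨c, hc, hlower⟩ := hexp.exists_mul_t_le_mul_a hθ hdec
  obtain ⟨C, hC, hupper⟩ := hexp.exists_mul_a_le_mul_t hdec
  obtain ⟨C', hC', hdouble⟩ := hexp.exists_t_le_mul_t_two_mul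
  refine ⟨2 * C * C' / c, ?_⟩
  filter_upwards [hupper, hdouble, (tendsto_add_atTop_nat 1).eventually hlower,
    eventually_ge_atTop 1] with n hn hdn hln hn1
  have hnpos : (0 : ℝ) < n := by exact_mod_cast hn1
  have hsucc : P.t (2 * n) ≤ P.t (n + 1) :=
    P.t_antitoneOn (Set.mem_Ici.2 (by omega)) (Set.mem_Ici.2 (by omega)) (by omega)
  have hsucc_le : ((n + 1 : ℕ) : ℝ) ≤ 2 * n := by norm_cast; omega
  have ha := P.pos (n + 1) (by omega)
  refine le_of_mul_le_mul_left ?_ hnpos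
  calc (n : ℝ) * P.a n ≤ C * P.t n := hn
    _ ≤ C * (C' * P.t (2 * n)) := by gcongr
    _ ≤ C * (C' * P.t (n + 1)) := by gcongr
    _ ≤ C * (C' * ((n + 1 : ℕ) * P.a (n + 1) / c)) := by
        gcongr
        rwa [le_div_iff₀ hc, mul_comm]
    _ ≤ C * (C' * (2 * n * P.a (n + 1) / c)) := by gcongr
    _ = n * (2 * C * C' / c * P.a (n + 1)) := by field_simp

end Expansive

end LurothData

theorem atom_tail_product_bound_general (P : LurothData) (θ : ℝ) (hθ : 0 < θ)
    (hexp : P.Expansive θ) (hdec : P.EventuallyDecreasing) :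
    ∃ K : ℕ, ∀ ℓ m : ℕ, K ≤ ℓ → ℓ ≤ m → P.a ℓ * P.t m ≤ P.a (ℓ + 1) := by
  obtain ⟨C, hC⟩ := hexp.exists_a_le_mul_a_succ hθ hdec
  have hsmall : ∀ᶠ ℓ in atTop, C * P.t ℓ ≤ 1 := by
    have h := P.tendsto_t_atTop.const_mul C
    rw [mul_zero] at h
    exact h.eventually_le_const one_pos
  obtain ⟨K, hK⟩ := eventually_atTop.1 (hC.and (hsmall.and (eventually_ge_atTop 1)))
  refine ⟨K, fun ℓ m hℓ hℓm => ?_⟩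
  obtain ⟨hratio, hCt, hℓ1⟩ := hK ℓ hℓ
  have ha := P.pos (ℓ + 1) (by omega)
  calc P.a ℓ * P.t m ≤ P.a ℓ * P.t ℓ :=
        mul_le_mul_of_nonneg_left (P.t_antitoneOn hℓ1 (le_trans hℓ1 hℓm) hℓm) (P.pos ℓ hℓ1).le
    _ ≤ C * P.a (ℓ + 1) * P.t ℓ := mul_le_mul_of_nonneg_right hratio (P.t_pos hℓ1).le
    _ = P.a (ℓ + 1) * (C * P.t ℓ) := by ring
    _ ≤ P.a (ℓ + 1) := mul_le_of_le_one_right ha.le hCt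

theorem atom_tail_product_bound (P : LurothData) (θ : ℝ) (hθ : 0 < θ)
    (hexp : P.Expansive θ) (hdec : P.EventuallyDecreasing)
    (ε : ℝ) (hε : 0 < ε) (hεθ : ε < θ / 6) :
    ∃ K : ℕ, ∀ ℓ m : ℕ, K ≤ ℓ → ℓ ≤ m → P.a ℓ * P.t m ≤ P.a (ℓ + 1) :=
  atom_tail_product_bound_general P θ hθ hexp hdec
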